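/- Define the stable set W^s = {(x,v) ∈ ℝⁿ×ℝⁿ : (X(t,x,v),V(t,x,v)) → (0,0) as t → ∞} for the flow X′ = V, V′ = X − F(t,X) with F continuous and |F(t,y)| ≤ A e^{−t}. Then W^s = {(x,v) : x + v = ∫₀^∞ e^{−s} F(s, X(s,x,v)) ds}. -/

import Mathlib

/-! With `g s = F (s, X s)`, the sum `u = X + V` solves `u' = u - g` and the difference
`w = X - V` solves `w' = -w + g`. Variation of constants gives `eᵗ w(t) = w(0) + ∫₀ᵗ eˢ g`,
whose integrand is bounded by `A`, so `w → 0` for every initial datum; and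
`e⁻ᵗ u(t) = u(0) - ∫₀ᵗ e⁻ˢ g`. If `u → 0` the left side tends to `0`, so
`u(0) = ∫₀^∞ e⁻ˢ g`; conversely this identity makes `u(t) = eᵗ ∫ₜ^∞ e⁻ˢ g = O(e⁻ᵗ)`.
As `w → 0` always, `(X, V) → 0` exactly when `u → 0`. -/

open MeasureTheory Filter

/-- The Euclidean norm on `Fin n → ℝ`. -/
noncomputable def euclNorm {n : ℕ} (x : Fin n → ℝ) : ℝ := Real.sqrt (∑ i, x i ^ 2)

open Real Set Topology

lemma norm_le_euclNorm {n : ℕ} (x : Fin n → ℝ) : ‖x‖ ≤ euclNorm x := by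
  rw [euclNorm, pi_norm_le_iff_of_nonneg (sqrt_nonneg _)]
  intro i
  rw [Real.norm_eq_abs, ← sqrt_sq_eq_abs]
  exact sqrt_le_sqrt (Finset.single_le_sum (fun j _ => sq_nonneg (x j)) (Finset.mem_univ i))

section

variable {E : Type*} [NormedAddCommGroup E] [NormedSpace ℝ E]

theorem tendsto_prodMk_zero_iff_tendsto_add {α : Type*} {l : Filter α} {f g : α → E}
    (hfg : Tendsto (f - g) l (𝓝 0)) :
    Tendsto (fun t => (f t, g t)) l (𝓝 (0, 0)) ↔ Tendsto (f + g) l (𝓝 0) := by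
  refine ⟨fun h => by simpa [Pi.add_def] using h.fst_nhds.add h.snd_nhds, fun h => ?_⟩
  have hf : f = (2 : ℝ)⁻¹ • ((f + g) + (f - g)) := by module
  have hg : g = (2 : ℝ)⁻¹ • ((f + g) - (f - g)) := by module
  rw [hf, hg]
  simpa using
    ((h.add hfg).const_smul (2 : ℝ)⁻¹).prodMk_nhds ((h.sub hfg).const_smul (2 : ℝ)⁻¹)

theorem norm_exp_neg_smul_le {g : ℝ → E} {A s : ℝ} (hs : 0 ≤ s)
    (hbound : ∀ t, 0 ≤ t → ‖g t‖ ≤ A * exp (-t)) :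
    ‖exp (-s) • g s‖ ≤ A * exp (-2 * s) :=
  calc ‖exp (-s) • g s‖ = exp (-s) * ‖g s‖ := by
        rw [norm_smul, norm_of_nonneg (exp_pos _).le]
    _ ≤ exp (-s) * (A * exp (-s)) := by gcongr; exact hbound s hs
    _ = A * exp (-2 * s) := by rw [show -2 * s = -s + -s by ring, exp_add]; ring

theorem integrableOn_exp_neg_smul_Ioi {g : ℝ → E} {A : ℝ} (hg : ContinuousOn g (Ici 0))
    (hbound : ∀ t, 0 ≤ t → ‖g t‖ ≤ A * exp (-t)) :
    IntegrableOn (fun s => exp (-s) • g s) (Ioi 0) := by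
  refine ((exp_neg_integrableOn_Ioi 0 two_pos).const_mul A).mono' ?_ ?_
  · exact ((continuous_exp.comp continuous_neg).continuousOn.smul hg).aestronglyMeasurable
      measurableSet_Ici |>.mono_set Ioi_subset_Ici_self
  · filter_upwards [ae_restrict_mem measurableSet_Ioi] with s hs
    exact norm_exp_neg_smul_le (le_of_lt hs) hbound

theorem norm_setIntegral_Ioi_exp_neg_smul_le {g : ℝ → E} {A t : ℝ} (ht : 0 ≤ t)
    (hbound : ∀ t, 0 ≤ t → ‖g t‖ ≤ A * exp (-t)) :
    ‖∫ s in Ioi t, exp (-s) • g s‖ ≤ A / 2 * exp (-2 * t) := by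
  have hint : ∫ s in Ioi t, A * exp (-2 * s) = A / 2 * exp (-2 * t) := by
    rw [integral_const_mul, integral_exp_mul_Ioi (by norm_num)]; ring
  rw [← hint]
  refine norm_integral_le_of_norm_le ((exp_neg_integrableOn_Ioi t two_pos).const_mul A) ?_
  filter_upwards [ae_restrict_mem measurableSet_Ioi] with s hs
  exact norm_exp_neg_smul_le (ht.trans hs.le) hbound

variable [CompleteSpace E]

theorem integral_exp_neg_mul_smul_eq_of_hasDerivAt {u h : ℝ → E} {c a b : ℝ}
    (hu : ∀ s ∈ uIcc a b, HasDerivAt u (c • u s + h s) s) (hh : ContinuousOn h (uIcc a b)) :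
    ∫ s in a..b, exp (-(c * s)) • h s = exp (-(c * b)) • u b - exp (-(c * a)) • u a := by
  have hexp : Continuous fun s => exp (-(c * s)) := by fun_prop
  refine intervalIntegral.integral_eq_sub_of_hasDerivAt (f := fun s => exp (-(c * s)) • u s)
    (fun s hs => ?_) (hexp.continuousOn.smul hh).intervalIntegrable
  have he : HasDerivAt (fun s => exp (-(c * s))) (exp (-(c * s)) * -c) s := by
    simpa using ((hasDerivAt_id s).const_mul c).neg.exp
  exact (he.smul (hu s hs)).congr_deriv (by module)

theorem tendsto_zero_of_hasDerivAt_eq_neg_add {w h : ℝ → E} {A : ℝ}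
    (hw : ∀ t, 0 ≤ t → HasDerivAt w (-w t + h t) t) (hh : ContinuousOn h (Ici 0))
    (hbound : ∀ t, 0 ≤ t → ‖h t‖ ≤ A * exp (-t)) : Tendsto w atTop (𝓝 0) := by
  have hmajor : Tendsto (fun t => ‖w 0‖ * exp (-t) + A * (t * exp (-t))) atTop (𝓝 0) := by
    simpa using (tendsto_exp_neg_atTop_nhds_zero.const_mul ‖w 0‖).add
      ((tendsto_pow_mul_exp_neg_atTop_nhds_zero 1).const_mul A)
  refine squeeze_zero_norm' ?_ hmajor
  filter_upwards [eventually_ge_atTop 0] with t ht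
  have hIcc : uIcc 0 t ⊆ Ici 0 := uIcc_of_le ht ▸ Icc_subset_Ici_self
  have hformula := integral_exp_neg_mul_smul_eq_of_hasDerivAt (u := w) (h := h) (c := -1)
    (a := 0) (b := t) (fun s hs => (hw s (hIcc hs)).congr_deriv (by simp)) (hh.mono hIcc)
  have hintegral : ‖∫ s in (0 : ℝ)..t, exp s • h s‖ ≤ A * t := by
    have hle : ∀ s ∈ uIoc 0 t, ‖exp s • h s‖ ≤ A := fun s hs => by
      rw [uIoc_of_le ht] at hs
      calc ‖exp s • h s‖ = exp s * ‖h s‖ := by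
            rw [norm_smul, norm_of_nonneg (exp_pos _).le]
        _ ≤ exp s * (A * exp (-s)) := by gcongr; exact hbound s hs.1.le
        _ = A := by rw [mul_left_comm, ← exp_add, add_neg_cancel, exp_zero, mul_one]
    simpa [abs_of_nonneg ht] using intervalIntegral.norm_integral_le_of_norm_le_const hle
  have hw_eq : w t = exp (-t) • (w 0 + ∫ s in (0 : ℝ)..t, exp s • h s) := by
    simp only [neg_mul, one_mul, neg_neg, mul_zero, neg_zero, exp_zero, one_smul] at hformula
    rw [hformula, add_sub_cancel, smul_smul, ← exp_add, neg_add_cancel, exp_zero, one_smul]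
  calc ‖w t‖ = exp (-t) * ‖w 0 + ∫ s in (0 : ℝ)..t, exp s • h s‖ := by
        rw [hw_eq, norm_smul, norm_of_nonneg (exp_pos _).le]
    _ ≤ exp (-t) * (‖w 0‖ + A * t) := by gcongr; exact (norm_add_le _ _).trans (by gcongr)
    _ = ‖w 0‖ * exp (-t) + A * (t * exp (-t)) := by ring

theorem exp_neg_smul_eq_sub_integral_of_hasDerivAt {u g : ℝ → E} {t : ℝ} (ht : 0 ≤ t)
    (hu : ∀ s, 0 ≤ s → HasDerivAt u (u s - g s) s) (hg : ContinuousOn g (Ici 0)) :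
    exp (-t) • u t = u 0 - ∫ s in (0 : ℝ)..t, exp (-s) • g s := by
  have hIcc : uIcc 0 t ⊆ Ici 0 := uIcc_of_le ht ▸ Icc_subset_Ici_self
  have hformula := integral_exp_neg_mul_smul_eq_of_hasDerivAt (u := u) (h := -g) (c := 1)
    (a := 0) (b := t) (fun s hs => (hu s (hIcc hs)).congr_deriv (by simp [sub_eq_add_neg]))
    (hg.neg.mono hIcc)
  simp only [one_mul, mul_zero, neg_zero, exp_zero, one_smul, Pi.neg_apply, smul_neg,
    intervalIntegral.integral_neg] at hformula
  rw [← neg_eq_iff_eq_neg.mpr hformula.symm]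
  abel

section StableManifold

variable {u g : ℝ → E} {A : ℝ} (hu : ∀ t, 0 ≤ t → HasDerivAt u (u t - g t) t)
  (hg : ContinuousOn g (Ici 0)) (hbound : ∀ t, 0 ≤ t → ‖g t‖ ≤ A * exp (-t))
include hu hg hbound

theorem eq_integral_of_tendsto_of_hasDerivAt_eq_sub (hlim : Tendsto u atTop (𝓝 0)) :
    u 0 = ∫ s in Ioi 0, exp (-s) • g s := by
  have hleft : Tendsto (fun t => exp (-t) • u t) atTop (𝓝 0) := by
    simpa using tendsto_exp_neg_atTop_nhds_zero.smul hlim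
  have hright : Tendsto (fun t => u 0 - ∫ s in (0 : ℝ)..t, exp (-s) • g s) atTop
      (𝓝 (u 0 - ∫ s in Ioi 0, exp (-s) • g s)) :=
    tendsto_const_nhds.sub (intervalIntegral_tendsto_integral_Ioi 0
      (integrableOn_exp_neg_smul_Ioi hg hbound) tendsto_id)
  have hformula : (fun t => exp (-t) • u t) =ᶠ[atTop]
      fun t => u 0 - ∫ s in (0 : ℝ)..t, exp (-s) • g s :=
    (eventually_ge_atTop 0).mono fun t ht => exp_neg_smul_eq_sub_integral_of_hasDerivAt ht hu hg
  exact sub_eq_zero.mp (tendsto_nhds_unique (hleft.congr' hformula) hright).symm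

theorem tendsto_zero_of_eq_integral_of_hasDerivAt_eq_sub
    (h0 : u 0 = ∫ s in Ioi 0, exp (-s) • g s) : Tendsto u atTop (𝓝 0) := by
  refine squeeze_zero_norm' ?_ (by simpa using tendsto_exp_neg_atTop_nhds_zero.const_mul (A / 2))
  filter_upwards [eventually_ge_atTop 0] with t ht
  have htail : u t = exp t • ∫ s in Ioi t, exp (-s) • g s := by
    have hsplit := intervalIntegral.integral_Ioi_sub_Ioi
      (integrableOn_exp_neg_smul_Ioi hg hbound) ht
    have hformula := exp_neg_smul_eq_sub_integral_of_hasDerivAt ht hu hg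
    rw [← hsplit, ← h0, sub_sub_cancel] at hformula
    rw [← hformula, smul_smul, ← exp_add, add_neg_cancel, exp_zero, one_smul]
  calc ‖u t‖ = exp t * ‖∫ s in Ioi t, exp (-s) • g s‖ := by
        rw [htail, norm_smul, norm_of_nonneg (exp_pos _).le]
    _ ≤ exp t * (A / 2 * exp (-2 * t)) := by
        gcongr; exact norm_setIntegral_Ioi_exp_neg_smul_le ht hbound
    _ = A / 2 * exp (-t) := by rw [mul_left_comm, ← exp_add]; ring_nf

theorem tendsto_zero_iff_eq_integral_of_hasDerivAt_eq_sub :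
    Tendsto u atTop (𝓝 0) ↔ u 0 = ∫ s in Ioi 0, exp (-s) • g s :=
  ⟨eq_integral_of_tendsto_of_hasDerivAt_eq_sub hu hg hbound,
    tendsto_zero_of_eq_integral_of_hasDerivAt_eq_sub hu hg hbound⟩

end StableManifold

end

theorem stmt16_general {n : ℕ} (F : ℝ → (Fin n → ℝ) → (Fin n → ℝ))
    (hF : Continuous (fun p : ℝ × (Fin n → ℝ) => F p.1 p.2))
    (A : ℝ)
    (hFbound : ∀ t : ℝ, 0 ≤ t → ∀ y : Fin n → ℝ, euclNorm (F t y) ≤ A * Real.exp (-t))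
    (X V : (Fin n → ℝ) → (Fin n → ℝ) → ℝ → Fin n → ℝ)
    (hX0 : ∀ x v, X x v 0 = x) (hV0 : ∀ x v, V x v 0 = v)
    (hX : ∀ x v, ∀ t : ℝ, 0 ≤ t → HasDerivAt (X x v) (V x v t) t)
    (hV : ∀ x v, ∀ t : ℝ, 0 ≤ t →
      HasDerivAt (V x v) (X x v t - F t (X x v t)) t) :
    {p : (Fin n → ℝ) × (Fin n → ℝ) |
        Tendsto (fun t => (X p.1 p.2 t, V p.1 p.2 t)) atTop (nhds (0, 0))}
      = {p : (Fin n → ℝ) × (Fin n → ℝ) |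
          p.1 + p.2 = ∫ s in Set.Ioi (0:ℝ), Real.exp (-s) • F s (X p.1 p.2 s)} := by
  ext ⟨x, v⟩
  set g : ℝ → Fin n → ℝ := fun s => F s (X x v s)
  have hg : ContinuousOn g (Ici 0) := fun s hs =>
    (hF.continuousAt.comp (continuousAt_id.prodMk (hX x v s hs).continuousAt)).continuousWithinAt
  have hbound : ∀ s, 0 ≤ s → ‖g s‖ ≤ A * exp (-s) := fun s hs =>
    (norm_le_euclNorm _).trans (hFbound s hs _)
  have hdiff : Tendsto (X x v - V x v) atTop (𝓝 0) :=
    tendsto_zero_of_hasDerivAt_eq_neg_add (fun t ht => ((hX x v t ht).sub (hV x v t ht)).congr_deriv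
      (by simp only [g, Pi.sub_apply]; abel)) hg hbound
  have hsum := tendsto_zero_iff_eq_integral_of_hasDerivAt_eq_sub
    (fun t ht => ((hX x v t ht).add (hV x v t ht)).congr_deriv
      (by simp only [g, Pi.add_apply]; abel)) hg hbound
  simp only [mem_ofPred_eq]
  rw [tendsto_prodMk_zero_iff_tendsto_add hdiff, hsum, Pi.add_apply, hX0, hV0]

/-- the stable set
`W^s = {(x,v) : (X(t,x,v),V(t,x,v)) → (0,0)}` of the flow `X′ = V, V′ = X − F(t,X)`
(with `F` continuous and `|F(t,y)| ≤ A e^{−t}`) equals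
`{(x,v) : x + v = ∫₀^∞ e^{−s} F(s,X(s,x,v)) ds}`. -/
theorem stmt16 {n : ℕ} (F : ℝ → (Fin n → ℝ) → (Fin n → ℝ))
    (hF : Continuous (fun p : ℝ × (Fin n → ℝ) => F p.1 p.2))
    (A : ℝ) (hA : 0 < A)
    (hFbound : ∀ t : ℝ, 0 ≤ t → ∀ y : Fin n → ℝ, euclNorm (F t y) ≤ A * Real.exp (-t))
    (X V : (Fin n → ℝ) → (Fin n → ℝ) → ℝ → Fin n → ℝ)
    (hX0 : ∀ x v, X x v 0 = x) (hV0 : ∀ x v, V x v 0 = v)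
    (hX : ∀ x v, ∀ t : ℝ, 0 ≤ t → HasDerivAt (X x v) (V x v t) t)
    (hV : ∀ x v, ∀ t : ℝ, 0 ≤ t →
      HasDerivAt (V x v) (X x v t - F t (X x v t)) t) :
    {p : (Fin n → ℝ) × (Fin n → ℝ) |
        Tendsto (fun t => (X p.1 p.2 t, V p.1 p.2 t)) atTop (nhds (0, 0))}
      = {p : (Fin n → ℝ) × (Fin n → ℝ) |
          p.1 + p.2 = ∫ s in Set.Ioi (0:ℝ), Real.exp (-s) • F s (X p.1 p.2 s)} :=
  stmt16_general F hF A hFbound X V hX0 hV0 hX hV
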